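/- arXiv:1606.01340 — 7 statements merged into one kernel-verified Lean document; each statement's English description precedes it below -/
import Mathlib

section
/- Let (X,d) be a metric space, c', c'' points with weights w(c') > 0 and w(c'') = γ·w(c') for γ > 1, and s a point with w(c')·d(c',s) ≤ M and w(c'')·d(c'',s) ≤ M for some M > 0. Suppose s'' is a point with w(c'')·d(c'',s'') ≤ w(c')·d(c',s''). Then min(w(c'')·d(c'',s''), w(c'')·d(c'',c')) ≤ 3M. -/
/-- Key case analysis in the 3-approximation proof of greedy AppMinMax:
with w(c'') = γ·w(c') for γ > 1, both clients within weighted cost M of the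
optimal server s, and c' currently of highest cost (w''·d(c'',s'') ≤ w'·d(c',s'')),
the cost of c'' after placing a server at c' is at most 3M. -/
theorem greedy_three_approx_case {X : Type*} [MetricSpace X]
    (c' c'' s s'' : X) (w' γ M : ℝ)
    (hw' : 0 < w') (hγ : 1 < γ) (hM : 0 < M)
    (h1 : w' * dist c' s ≤ M) (h2 : (γ * w') * dist c'' s ≤ M)
    (hs'' : (γ * w') * dist c'' s'' ≤ w' * dist c' s'') :
    min ((γ * w') * dist c'' s'') ((γ * w') * dist c'' c') ≤ 3 * M := by
  have hγ0 : (0 : ℝ) < γ := by linarith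
  rcases le_total γ 2 with h | h
  · refine le_trans (min_le_right _ _) ?_
    have tri : dist c'' c' ≤ dist c'' s + dist c' s := by
      simpa [dist_comm s c'] using dist_triangle c'' s c'
    have tri' := mul_le_mul_of_nonneg_left tri (mul_pos hγ0 hw').le
    have hA : γ * (w' * dist c' s) ≤ γ * M :=
      mul_le_mul_of_nonneg_left h1 hγ0.le
    nlinarith
  · refine le_trans (min_le_left _ _) ?_
    have tri : dist c' s'' ≤ dist c' s + dist c'' s + dist c'' s'' := by
      have t1 := dist_triangle c' s s''
      have t2 := dist_triangle s c'' s''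
      rw [dist_comm s c''] at t2
      linarith
    have tri' := mul_le_mul_of_nonneg_left tri hw'.le
    have key : (γ - 1) * (w' * dist c'' s'') ≤ w' * dist c' s + w' * dist c'' s := by
      nlinarith
    have key' := mul_le_mul_of_nonneg_left key hγ0.le
    have hA : γ * (w' * dist c' s) ≤ γ * M := mul_le_mul_of_nonneg_left h1 hγ0.le
    nlinarith [dist_nonneg (x := c'') (y := s''), mul_nonneg hw'.le (dist_nonneg (x := c'') (y := s''))]
end

section
/- For every ε > 0 there exist a metric space (a path graph with shortest-path metric), two clients c₁, c₂ with weights w(c₁)=1, w(c₂)=α for some 0<α<2, and existing servers s₁, s₂, such that the greedy strategy of placing one new server at the client of maximum cost yields a maximum weighted cost strictly greater than (3−ε) times the optimal minmax cost achievable with one new server. -/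
set_option maxHeartbeats 1000000


/-- Lower-bound construction: for every ε > 0 there is a configuration on the real
line (a path s₁ — c₁ — c₂ — s₂ with the shortest-path metric) with client weights
w(c₁) = 1 and w(c₂) = α for some 0 < α < 2, such that placing one new server at the
client of maximum cost (which is c₁) yields a maximum weighted cost strictly greater
than (3 − ε) times the optimal minmax cost achievable with one new server. -/
theorem greedy_not_three_minus_eps_approx (ε : ℝ) (hε : 0 < ε) :
    ∃ (α : ℝ) (s₁ c₁ c₂ s₂ : ℝ) (w : ℝ → ℝ),
      0 < α ∧ α < 2 ∧ w c₁ = 1 ∧ w c₂ = α ∧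
      -- c₁ is the client of maximum cost with respect to the existing servers
      w c₂ * min (dist c₂ s₁) (dist c₂ s₂) ≤ w c₁ * min (dist c₁ s₁) (dist c₁ s₂) ∧
      -- greedy (server at c₁) exceeds (3-ε) times the optimal one-server minmax cost
      (3 - ε) *
          (⨅ p : ℝ,
            max (w c₁ * min (min (dist c₁ s₁) (dist c₁ s₂)) (dist c₁ p))
                (w c₂ * min (min (dist c₂ s₁) (dist c₂ s₂)) (dist c₂ p)))
        < max (w c₁ * min (min (dist c₁ s₁) (dist c₁ s₂)) (dist c₁ c₁))
              (w c₂ * min (min (dist c₂ s₁) (dist c₂ s₂)) (dist c₂ c₁)) := by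
  obtain ⟨α, hα0, hα1, hα2, hαε⟩ : ∃ α : ℝ, 0 < α ∧ 1 ≤ α ∧ α < 2 ∧ 3 - ε < α + 1 := by
    have h1 : 0 < min ε 1 := lt_min hε one_pos
    have h2 : min ε 1 ≤ 1 := min_le_right _ _
    have h3 : min ε 1 ≤ ε := min_le_left _ _
    exact ⟨2 - min ε 1 / 2, by linarith, by linarith, by linarith, by linarith⟩
  have key1 : α^2 + α ≤ 2*(α+1) := by nlinarith
  have key2 : α ≤ α^2 + α := by nlinarith
  have key3 : α + 1 ≤ α^2 + 2*α + 1 := by nlinarith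
  refine ⟨α, -(α^2+α), 0, α+1, 2*(α+1), fun x => if x = 0 then 1 else α, hα0, hα2,
    by simp, by simp only [if_neg (by intro h; linarith : ¬ (α+1 = 0))], ?_, ?_⟩
  · simp only [if_pos rfl, if_true, if_neg (by intro h; linarith : ¬ (α+1 = 0)),
      Real.dist_eq]
    rw [show |α+1 - -(α^2+α)| = α^2+2*α+1 by rw [abs_of_nonneg (by nlinarith)]; ring,
        show |α+1 - 2*(α+1)| = α+1 by rw [abs_of_nonpos (by nlinarith)]; ring,
        show |0 - -(α^2+α)| = α^2+α by rw [abs_of_nonneg (by nlinarith)]; ring,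
        show |0 - 2*(α+1)| = 2*(α+1) by rw [abs_of_nonpos (by nlinarith)]; ring]
    rw [min_eq_right key3, min_eq_left key1]
    nlinarith
  · simp only [if_pos rfl, if_true, if_neg (by intro h; linarith : ¬ (α+1 = 0)),
      Real.dist_eq]
    set f : ℝ → ℝ := fun p =>
      max (1 * min (min (|0 - -(α^2+α)|) (|0 - 2*(α+1)|)) (|0 - p|))
          (α * min (min (|α+1 - -(α^2+α)|) (|α+1 - 2*(α+1)|)) (|α+1 - p|)) with hf
    have hf0 : ∀ p, 0 ≤ f p := by
      intro p
      have : (0:ℝ) ≤ 1 * min (min (|0 - -(α^2+α)|) (|0 - 2*(α+1)|)) (|0 - p|) := by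
        positivity
      exact le_trans this (le_max_left _ _)
    have hbdd : BddBelow (Set.range f) := ⟨0, by rintro x ⟨p, rfl⟩; exact hf0 p⟩
    have hinf0 : 0 ≤ ⨅ p, f p := le_ciInf hf0
    have habs : |0 - -(α^2+α)| = α^2+α := by rw [abs_of_nonneg (by nlinarith)]; ring
    have habs2 : |0 - 2*(α+1)| = 2*(α+1) := by rw [abs_of_nonpos (by nlinarith)]; ring
    have habs3 : |α+1 - -(α^2+α)| = α^2+2*α+1 := by
      rw [abs_of_nonneg (by nlinarith)]; ring
    have habs4 : |α+1 - 2*(α+1)| = α+1 := by rw [abs_of_nonpos (by nlinarith)]; ring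
    have hfα : f α = α := by
      simp only [hf]
      rw [habs, habs2, habs3, habs4,
          show |(0:ℝ) - α| = α by rw [abs_of_nonpos (by nlinarith)]; ring,
          show |α+1 - α| = 1 by rw [abs_of_nonneg (by norm_num)]; norm_num,
          min_eq_right (le_min key2 (by nlinarith)),
          min_eq_right (le_min (by nlinarith) (by nlinarith))]
      rw [one_mul, mul_one, max_self]
    have hinfα : (⨅ p, f p) ≤ α := hfα ▸ ciInf_le hbdd α
    have hRHS : max (1 * min (min (|0 - -(α^2+α)|) (|0 - 2*(α+1)|)) (|(0:ℝ) - 0|))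
          (α * min (min (|α+1 - -(α^2+α)|) (|α+1 - 2*(α+1)|)) (|α+1 - 0|)) = α*(α+1) := by
      rw [habs, habs2, habs3, habs4,
          show |(0:ℝ) - 0| = 0 by norm_num,
          show |α+1 - 0| = α+1 by rw [abs_of_nonneg (by nlinarith)]; ring,
          min_eq_right (le_min (by nlinarith) (by nlinarith)),
          min_eq_right (le_min key3 le_rfl),
          show (1:ℝ) * 0 = 0 by ring,
          max_eq_right (by nlinarith)]
    rw [hRHS]
    show (3 - ε) * (⨅ p, f p) < α*(α+1)
    rcases le_or_gt (3 - ε) 0 with h | h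
    · have : (3 - ε) * (⨅ p, f p) ≤ 0 := mul_nonpos_of_nonpos_of_nonneg h hinf0
      nlinarith
    · have h1 : (3 - ε) * (⨅ p, f p) ≤ (3 - ε) * α :=
        mul_le_mul_of_nonneg_left hinfα (le_of_lt h)
      nlinarith
end

section
/- Let C be a finite set of clients, S a server set, and for any set P of points let cmax_{C}(P) = max over c in C of w(c)·d(c, nearest point in S∪P). Let C' = {c₁,...,c_m} be the m clients of highest cost and suppose that the optimal k-server minmax value μ' for client set C' satisfies Cost_S(c_{m+1}) ≤ μ' < Cost_S(c_m). Then μ' equals the optimal k-server minmax value for the full client set C. -/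
open Metric in
/-- Early-termination lemma: if the optimal k-server minmax value μ' for the top m
clients satisfies Cost_S(c_{m+1}) ≤ μ' < Cost_S(c_m) (0-based: cost m ≤ μ' < cost (m-1)),
then μ' equals the optimal k-server minmax value for the full client set. -/
theorem early_termination {X : Type*} [MetricSpace X]
    (S : Set X) (hS : S.Nonempty) (n k m : ℕ) (hm : 0 < m) (hmn : m < n)
    (c : ℕ → X) (w : ℕ → ℝ) (hw : ∀ i, 0 < w i)
    (hsort : ∀ i j, i ≤ j → j < n →
      w j * infDist (c j) S ≤ w i * infDist (c i) S)
    (μ' : ℝ)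
    (hμ' : μ' = ⨅ P : {P : Finset X // P.card = k},
      ⨆ i ∈ Finset.range m, w i * infDist (c i) (S ∪ (P.1 : Set X)))
    (h1 : w m * infDist (c m) S ≤ μ')
    (h2 : μ' < w (m - 1) * infDist (c (m - 1)) S) :
    μ' = ⨅ P : {P : Finset X // P.card = k},
      ⨆ i ∈ Finset.range n, w i * infDist (c i) (S ∪ (P.1 : Set X)) := by
  classical
  have hμ0 : 0 ≤ μ' := le_trans (mul_nonneg (hw m).le infDist_nonneg) h1
  have hB0 : 0 ≤ w 0 * infDist (c 0) S := mul_nonneg (hw 0).le infDist_nonneg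
  have hv0 : ∀ (T : Set X) (i : ℕ), 0 ≤ w i * infDist (c i) (S ∪ T) := fun T i =>
    mul_nonneg (hw i).le infDist_nonneg
  have hvS : ∀ (T : Set X) (i : ℕ),
      w i * infDist (c i) (S ∪ T) ≤ w i * infDist (c i) S := fun T i =>
    mul_le_mul_of_nonneg_left (infDist_le_infDist_of_subset Set.subset_union_left hS) (hw i).le
  have hvB : ∀ (T : Set X) (i : ℕ), i < n →
      w i * infDist (c i) (S ∪ T) ≤ w 0 * infDist (c 0) S := fun T i hi =>
    (hvS T i).trans (hsort 0 i (Nat.zero_le _) hi)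
  have hbdd : ∀ (T : Set X) (N : ℕ), N ≤ n → BddAbove (Set.range fun i =>
      ⨆ _ : i ∈ Finset.range N, w i * infDist (c i) (S ∪ T)) := by
    intro T N hN
    refine ⟨w 0 * infDist (c 0) S, ?_⟩
    rintro x ⟨i, rfl⟩
    dsimp only
    by_cases hi : i ∈ Finset.range N
    · haveI : Nonempty (i ∈ Finset.range N) := ⟨hi⟩
      rw [ciSup_const]
      exact hvB T i (lt_of_lt_of_le (Finset.mem_range.mp hi) hN)
    · haveI : IsEmpty (i ∈ Finset.range N) := ⟨hi⟩
      rw [Real.iSup_of_isEmpty]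
      exact hB0
  have hle_sup : ∀ (T : Set X) (N : ℕ), N ≤ n → ∀ i, i < N →
      w i * infDist (c i) (S ∪ T) ≤
        ⨆ j ∈ Finset.range N, w j * infDist (c j) (S ∪ T) := by
    intro T N hN i hi
    have h := le_ciSup (hbdd T N hN) i
    haveI : Nonempty (i ∈ Finset.range N) := ⟨Finset.mem_range.mpr hi⟩
    rwa [ciSup_const] at h
  have hsup_le : ∀ (T : Set X) (N : ℕ) (a : ℝ), 0 ≤ a →
      (∀ i, i < N → w i * infDist (c i) (S ∪ T) ≤ a) →
      (⨆ i ∈ Finset.range N, w i * infDist (c i) (S ∪ T)) ≤ a := by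
    intro T N a ha h
    exact Real.iSup_le (fun i => Real.iSup_le (fun hi => h i (Finset.mem_range.mp hi)) ha) ha
  have hsup_nonneg : ∀ (T : Set X) (N : ℕ), 0 < N → N ≤ n →
      0 ≤ ⨆ i ∈ Finset.range N, w i * infDist (c i) (S ∪ T) := fun T N h0 hN =>
    le_trans (hv0 T 0) (hle_sup T N hN 0 h0)
  by_cases hne : Nonempty {P : Finset X // P.card = k}
  · have hFbdd : BddBelow (Set.range fun P : {P : Finset X // P.card = k} =>
        ⨆ i ∈ Finset.range m, w i * infDist (c i) (S ∪ (P.1 : Set X))) := by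
      refine ⟨0, ?_⟩
      rintro x ⟨Q, rfl⟩
      exact hsup_nonneg _ m hm hmn.le
    have hGbdd : BddBelow (Set.range fun P : {P : Finset X // P.card = k} =>
        ⨆ i ∈ Finset.range n, w i * infDist (c i) (S ∪ (P.1 : Set X))) := by
      refine ⟨0, ?_⟩
      rintro x ⟨Q, rfl⟩
      exact hsup_nonneg _ n (hm.trans hmn) le_rfl
    apply le_antisymm
    · refine le_ciInf fun P => ?_
      rw [hμ']
      refine (ciInf_le hFbdd P).trans ?_
      refine hsup_le _ m _ (hsup_nonneg _ n (hm.trans hmn) le_rfl) fun i hi => ?_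
      exact hle_sup _ n le_rfl i (hi.trans hmn)
    · apply le_of_forall_pos_le_add
      intro ε hε
      have hlt : (⨅ P : {P : Finset X // P.card = k},
          ⨆ i ∈ Finset.range m, w i * infDist (c i) (S ∪ (P.1 : Set X))) < μ' + ε := by
        rw [← hμ']; linarith
      obtain ⟨P, hP⟩ := exists_lt_of_ciInf_lt hlt
      refine (ciInf_le hGbdd P).trans ?_
      refine hsup_le _ n _ (by linarith) fun i hi => ?_
      by_cases him : i < m
      · exact ((hle_sup _ m hmn.le i him).trans hP.le)
      · have : w i * infDist (c i) (S ∪ (P.1 : Set X)) ≤ w m * infDist (c m) S :=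
          (hvS _ i).trans (hsort m i (Nat.le_of_not_lt him) hi)
        linarith
  · haveI := not_nonempty_iff.mp hne
    rw [hμ', Real.iInf_of_isEmpty, Real.iInf_of_isEmpty]
end

section
/- Let A be a set of k points (apex points) with associated costs, and define amax(A) as the maximum client cost under the corresponding server placement. Let p ∈ A, let C' be the set of clients covered by p (i.e., clients whose cost under a server at p.pos is at most p.cost), and let q ∉ A be another candidate point with zmax(C',p) ≥ zmax(C',q), where zmax(C',x) = max(x.cost, max{Cost_S(c) : c ∈ C' not covered by x}) (taking the second max as 0 if all of C' is covered by x). Then for A' = (A \ {p}) ∪ {q}, every client c satisfies Cost_{S∪A'}(c) ≤ amax(A), and hence amax(A') ≤ amax(A). -/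
/-- Client `c` is covered by candidate point `r = (pos, cost)`: placing a new server
at `r.1` gives `c` a cost of at most `r.2`. -/
def covered {X : Type*} [MetricSpace X] (S : Set X) (w : X → ℝ)
    (r : X × ℝ) (c : X) : Prop :=
  w c * Metric.infDist c (S ∪ {r.1}) ≤ r.2

/-- Maximum client cost given servers at S plus the positions of the points of A. -/
noncomputable def amax {X : Type*} [MetricSpace X] [DecidableEq X] (S : Set X) (w : X → ℝ)
    (C : Finset X) (hC : C.Nonempty) (A : Finset (X × ℝ)) : ℝ :=
  C.sup' hC fun c => w c * Metric.infDist c (S ∪ ↑(A.image Prod.fst))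

/-- zmax(C', r) = max(r.cost, max{Cost_S(c) : c ∈ C' not covered by r}) (0 if none). -/
noncomputable def zmax {X : Type*} [MetricSpace X] (S : Set X) (w : X → ℝ)
    (C' : Finset X) (r : X × ℝ) : ℝ :=
  max r.2 (⨆ c : {c : X // c ∈ C' ∧ ¬ covered S w r c}, w c.1 * Metric.infDist c.1 S)

/-- Apex replacement lemma: replacing an apex point p of A by a point q with
zmax(C',q) ≤ zmax(C',p), where C' is the set of clients covered by p, does not
increase the overall minmax cost. -/
theorem apex_replacement {X : Type*} [MetricSpace X] [DecidableEq X]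
    (S : Set X) (hS : S.Nonempty)
    (C : Finset X) (hC : C.Nonempty) (w : X → ℝ) (hw : ∀ c, 0 < w c)
    (A : Finset (X × ℝ)) (p q : X × ℝ) (hp : p ∈ A) (hq : q ∉ A)
    (C' : Finset X) (hC' : ∀ c : X, c ∈ C' ↔ c ∈ C ∧ covered S w p c)
    -- apex property: amax(A) is lower bounded by the costs of the points of A
    (hapex : ∀ r ∈ A, r.2 ≤ amax S w C hC A)
    -- every client is covered by some apex point of A
    (hcov : ∀ c ∈ C, ∃ r ∈ A, covered S w r c)
    (hz : zmax S w C' q ≤ zmax S w C' p) :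
    (∀ c ∈ C,
        w c * Metric.infDist c (S ∪ ↑((insert q (A.erase p)).image Prod.fst))
          ≤ amax S w C hC A) ∧
      amax S w C hC (insert q (A.erase p)) ≤ amax S w C hC A := by
  set A' := insert q (A.erase p) with hA'
  have hnonneg : (0:ℝ) ≤ amax S w C hC A := by
    obtain ⟨c, hc⟩ := hC
    calc (0:ℝ) ≤ w c * Metric.infDist c (S ∪ ↑(A.image Prod.fst)) :=
        mul_nonneg (hw c).le Metric.infDist_nonneg
      _ ≤ _ := Finset.le_sup' (fun c => w c * Metric.infDist c (S ∪ ↑(A.image Prod.fst))) hc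
  have hzp : zmax S w C' p = max p.2 0 := by
    haveI : IsEmpty {c : X // c ∈ C' ∧ ¬ covered S w p c} := by
      constructor; rintro ⟨c, hc, hnc⟩; exact hnc ((hC' c).1 hc).2
    unfold zmax
    rw [Real.iSup_of_isEmpty]
  have hzpa : zmax S w C' p ≤ amax S w C hC A := by
    rw [hzp]; exact max_le (hapex p hp) hnonneg
  have hq2 : q.2 ≤ amax S w C hC A :=
    le_trans (le_trans (le_max_left _ _) hz) hzpa
  have key : ∀ c ∈ C,
      w c * Metric.infDist c (S ∪ ↑(A'.image Prod.fst)) ≤ amax S w C hC A := by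
    intro c hc
    by_cases hcq : covered S w q c
    · have hqmem : q.1 ∈ (↑(A'.image Prod.fst) : Set X) := by
        simp only [Finset.coe_image, Set.mem_image, Finset.mem_coe]
        exact ⟨q, Finset.mem_insert_self _ _, rfl⟩
      have hsub : S ∪ {q.1} ⊆ S ∪ ↑(A'.image Prod.fst) :=
        Set.union_subset_union_right _ (Set.singleton_subset_iff.2 hqmem)
      have hmono : Metric.infDist c (S ∪ ↑(A'.image Prod.fst))
          ≤ Metric.infDist c (S ∪ {q.1}) :=
        Metric.infDist_le_infDist_of_subset hsub (hS.mono Set.subset_union_left)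
      calc w c * Metric.infDist c (S ∪ ↑(A'.image Prod.fst))
          ≤ w c * Metric.infDist c (S ∪ {q.1}) :=
            mul_le_mul_of_nonneg_left hmono (hw c).le
        _ ≤ q.2 := hcq
        _ ≤ amax S w C hC A := hq2
    · by_cases hcC' : c ∈ C'
      · haveI : Finite {c : X // c ∈ C' ∧ ¬ covered S w q c} := by
          have hfin : {c : X | c ∈ C' ∧ ¬ covered S w q c}.Finite :=
            C'.finite_toSet.subset fun x hx => hx.1
          exact hfin.to_subtype
        have hle : w c * Metric.infDist c S ≤ zmax S w C' q := by
          have := le_ciSup (Set.Finite.bddAbove (Set.finite_range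
            (fun c : {c : X // c ∈ C' ∧ ¬ covered S w q c} =>
              w c.1 * Metric.infDist c.1 S))) (⟨c, hcC', hcq⟩ :
              {c : X // c ∈ C' ∧ ¬ covered S w q c})
          exact le_trans this (le_max_right _ _)
        have hmono : Metric.infDist c (S ∪ ↑(A'.image Prod.fst))
            ≤ Metric.infDist c S :=
          Metric.infDist_le_infDist_of_subset Set.subset_union_left hS
        calc w c * Metric.infDist c (S ∪ ↑(A'.image Prod.fst))
            ≤ w c * Metric.infDist c S :=
              mul_le_mul_of_nonneg_left hmono (hw c).le
          _ ≤ zmax S w C' q := hle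
          _ ≤ zmax S w C' p := hz
          _ ≤ amax S w C hC A := hzpa
      · obtain ⟨r, hrA, hrc⟩ := hcov c hc
        have hrp : r ≠ p := fun h => hcC' ((hC' c).2 ⟨hc, h ▸ hrc⟩)
        have hrmem : r.1 ∈ (↑(A'.image Prod.fst) : Set X) := by
          simp only [Finset.coe_image, Set.mem_image, Finset.mem_coe]
          exact ⟨r, Finset.mem_insert_of_mem (Finset.mem_erase.2 ⟨hrp, hrA⟩), rfl⟩
        have hsub : S ∪ {r.1} ⊆ S ∪ ↑(A'.image Prod.fst) :=
          Set.union_subset_union_right _ (Set.singleton_subset_iff.2 hrmem)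
        have hmono : Metric.infDist c (S ∪ ↑(A'.image Prod.fst))
            ≤ Metric.infDist c (S ∪ {r.1}) :=
          Metric.infDist_le_infDist_of_subset hsub (hS.mono Set.subset_union_left)
        calc w c * Metric.infDist c (S ∪ ↑(A'.image Prod.fst))
            ≤ w c * Metric.infDist c (S ∪ {r.1}) :=
              mul_le_mul_of_nonneg_left hmono (hw c).le
          _ ≤ r.2 := hrc
          _ ≤ amax S w C hC A := hapex r hrA
  exact ⟨key, Finset.sup'_le hC _ key⟩
end

section
/- Let each of n unit-weight clients c₁,...,cₙ (sorted by non-increasing cost) be assigned in an optimal solution Q of k servers s'₁,...,s'_k to its nearest server, partitioning the top-m clients into groups C'₁,...,C'_k with max cost cmax(Q). If the greedy algorithm places a server at the currently highest-cost client in each of k iterations, then after k iterations every client among c₁,...,c_m has cost at most 2·cmax(Q), and hence the greedy solution A satisfies cmax(A) ≤ 2·cmax(Q). -/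
open Metric in
/-- Greedy 2-approximation for unit-weight clients: if the top-m clients are assigned
in an optimal k-server solution (servers s', assignment g) with all assigned distances
at most M = cmax(Q), the remaining clients already have cost at most M, and the greedy
algorithm places each of its k servers at a currently highest-cost client, then after
k iterations every top-m client has cost at most 2M, and hence cmax(A) ≤ 2·cmax(Q). -/
theorem greedy_two_approx_unit_weights {X : Type*} [MetricSpace X]
    (S : Set X) (hS : S.Nonempty) (n m k : ℕ) (hmn : m ≤ n)
    (c : ℕ → X) (M : ℝ)
    (s' : Fin k → X) (g : ℕ → Fin k)
    (hassign : ∀ i < m, dist (c i) (s' (g i)) ≤ M)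
    (htail : ∀ i, m ≤ i → i < n → Metric.infDist (c i) S ≤ M)
    (a : ℕ → ℕ) (ha : ∀ t < k, a t < n)
    (hgreedy : ∀ t < k, ∀ i < n,
      infDist (c i) (S ∪ (fun j => c (a j)) '' Set.Iio t)
        ≤ infDist (c (a t)) (S ∪ (fun j => c (a j)) '' Set.Iio t)) :
    (∀ i < m, infDist (c i) (S ∪ (fun j => c (a j)) '' Set.Iio k) ≤ 2 * M) ∧
      (∀ i < n, infDist (c i) (S ∪ (fun j => c (a j)) '' Set.Iio k) ≤ 2 * M) := by
  set T : ℕ → Set X := fun t => S ∪ (fun j => c (a j)) '' Set.Iio t with hT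
  have hTne : ∀ t, (T t).Nonempty := fun t => hS.mono Set.subset_union_left
  have hmono : ∀ {t t' : ℕ}, t ≤ t' → ∀ x : X, infDist x (T t') ≤ infDist x (T t) := by
    intro t t' h x
    exact Metric.infDist_le_infDist_of_subset
      (Set.union_subset_union_right _
        (Set.image_mono (fun y hy => lt_of_lt_of_le hy h))) (hTne t)
  have hSle : ∀ t, ∀ x : X, infDist x (T t) ≤ infDist x S := fun t x =>
    Metric.infDist_le_infDist_of_subset Set.subset_union_left hS
  have hMnonneg : 0 < n → 0 ≤ M := by
    intro hn
    rcases Nat.eq_zero_or_pos m with hm | hm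
    · exact le_trans Metric.infDist_nonneg (htail 0 (by omega) hn)
    · exact le_trans dist_nonneg (hassign 0 hm)
  suffices h : ∀ i < n, infDist (c i) (T k) ≤ 2 * M by
    exact ⟨fun i hi => h i (lt_of_lt_of_le hi hmn), h⟩
  by_cases hcase : ∀ t < k, a t < m ∧ ∀ t' < t, g (a t') ≠ g (a t)
  · -- all picks are top-m clients with pairwise distinct groups: pigeonhole
    intro i hi
    rcases lt_or_ge i m with him | him
    · have hMn := hMnonneg (by omega)
      set f : Fin k → Fin k := fun t => g (a t.val) with hf
      have hinj : Function.Injective f := by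
        intro t t' hEq
        by_contra hne
        rcases lt_trichotomy t.val t'.val with hlt | heq | hgt
        · exact (hcase t'.val t'.isLt).2 t.val hlt hEq
        · exact hne (Fin.ext heq)
        · exact (hcase t.val t.isLt).2 t'.val hgt hEq.symm
      have hsurj : Function.Surjective f := Finite.surjective_of_injective hinj
      obtain ⟨t, ht⟩ := hsurj (g i)
      have hmem : c (a t.val) ∈ T k := Or.inr ⟨t.val, t.isLt, rfl⟩
      have h1 : infDist (c i) (T k) ≤ dist (c i) (c (a t.val)) :=
        Metric.infDist_le_dist_of_mem hmem
      have h2 : dist (c i) (c (a t.val)) ≤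
          dist (c i) (s' (g i)) + dist (s' (g i)) (c (a t.val)) := dist_triangle _ _ _
      have h3 := hassign i him
      have h4 : dist (s' (g i)) (c (a t.val)) ≤ M := by
        rw [dist_comm, ← ht]
        exact hassign (a t.val) (hcase t.val t.isLt).1
      linarith
    · have := htail i him hi
      have := hSle k (c i)
      have hMn := hMnonneg (by omega)
      linarith
  · -- some pick is a tail client or repeats a group: use minimal such step
    push_neg at hcase
    obtain ⟨t1, ht1k, ht1⟩ := hcase
    have hex : ∃ t, t < k ∧ ¬(a t < m ∧ ∀ t' < t, g (a t') ≠ g (a t)) := by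
      refine ⟨t1, ht1k, fun h => ?_⟩
      obtain ⟨t', h1, h2⟩ := ht1 h.1
      exact h.2 t' h1 h2
    classical
    obtain ⟨t, ⟨htk, htP⟩, htmin⟩ :
        ∃ t, (t < k ∧ ¬(a t < m ∧ ∀ t' < t, g (a t') ≠ g (a t))) ∧
          ∀ t' < t, ¬(t' < k ∧ ¬(a t' < m ∧ ∀ t'' < t', g (a t'') ≠ g (a t'))) :=
      ⟨Nat.find hex, Nat.find_spec hex, fun t' h => Nat.find_min hex h⟩
    have hMn := hMnonneg (by have := ha t htk; omega)
    have hprev : ∀ t' < t, a t' < m := by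
      intro t' ht't
      have := htmin t' ht't
      push_neg at this
      exact (this (by omega)).1
    have hat : infDist (c (a t)) (T t) ≤ 2 * M := by
      push_neg at htP
      rcases le_or_gt m (a t) with hge | hlt
      · have h1 := htail (a t) hge (ha t htk)
        have h2 := hSle t (c (a t))
        linarith
      · obtain ⟨t', ht't, hgg⟩ := htP hlt
        have hmem : c (a t') ∈ T t := Or.inr ⟨t', ht't, rfl⟩
        have h1 : infDist (c (a t)) (T t) ≤ dist (c (a t)) (c (a t')) :=
          Metric.infDist_le_dist_of_mem hmem
        have h2 : dist (c (a t)) (c (a t')) ≤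
            dist (c (a t)) (s' (g (a t))) + dist (s' (g (a t))) (c (a t')) :=
          dist_triangle _ _ _
        have h3 := hassign (a t) hlt
        have h4 : dist (s' (g (a t))) (c (a t')) ≤ M := by
          rw [dist_comm, ← hgg]
          exact hassign (a t') (hprev t' ht't)
        linarith
    intro i hi
    calc infDist (c i) (T k) ≤ infDist (c i) (T t) := hmono (le_of_lt htk) _
      _ ≤ infDist (c (a t)) (T t) := hgreedy t htk i hi
      _ ≤ 2 * M := hat
end

section
/- Pruning dominated PSPs preserves optimality: if p₁ and p₂ are two candidate points covering client sets C₁ and C₂ respectively, with C₁ ⊆ C₂ and p₁.cost ≤ p₂.cost ≤ B for a threshold B, then for any k-candidate Z containing p₁, the set Z' = (Z \ {p₁}) ∪ {p₂} covers at least the clients covered by Z, and max(Z'.maxcost, B) ≤ max(Z.maxcost, B). -/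
/-- Pruning dominated PSPs preserves optimality (Property 2 / Strategy 3): if p₁, p₂
cover client sets C₁ ⊆ C₂ with p₁.cost ≤ p₂.cost ≤ B, then replacing p₁ by p₂ in any
k-candidate Z covers at least the clients covered by Z and does not increase
max(Z.maxcost, B). -/
theorem psp_pruning_dominated {X : Type*} [MetricSpace X] [DecidableEq X]
    (S : Set X) (w : X → ℝ)
    (p₁ p₂ : X × ℝ) (B : ℝ)
    (hsub : ∀ c : X, covered S w p₁ c → covered S w p₂ c)
    (h12 : p₁.2 ≤ p₂.2) (h2B : p₂.2 ≤ B)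
    (Z : Finset (X × ℝ)) (hp₁ : p₁ ∈ Z) :
    (∀ c : X, (∃ r ∈ Z, covered S w r c) →
        ∃ r ∈ insert p₂ (Z.erase p₁), covered S w r c) ∧
      max ((insert p₂ (Z.erase p₁)).sup' (Finset.insert_nonempty _ _) Prod.snd) B
        ≤ max (Z.sup' ⟨p₁, hp₁⟩ Prod.snd) B := by
  constructor
  · rintro c ⟨r, hr, hcov⟩
    by_cases h : r = p₁
    · exact ⟨p₂, Finset.mem_insert_self _ _, hsub c (h ▸ hcov)⟩
    · exact ⟨r, Finset.mem_insert_of_mem (Finset.mem_erase.2 ⟨h, hr⟩), hcov⟩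
  · apply max_le _ (le_max_right _ _)
    rw [Finset.sup'_le_iff]
    rintro r hr
    rcases Finset.mem_insert.1 hr with h | h
    · exact h ▸ le_max_of_le_right h2B
    · exact le_max_of_le_left (Finset.le_sup' _ (Finset.mem_of_mem_erase h))
end

section
/- The greedy/approximation algorithm AppMinMax for k servers on sorted clients terminates with maximum cost at most Cost_S(c_{k+1}): if in each of k iterations a server is placed exactly at the location of the currently highest-cost client, then in the extreme case where the servers end up at c₁,...,c_k, every remaining client's cost is at most Cost_S(c_{k+1}). -/
open Metric in
/-- AppMinMax termination bound: with clients sorted by non-increasing cost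
(0-based, so c_{k+1} of the paper is index k), placing the k new servers at the
locations of the k highest-cost clients leaves every client with cost at most
Cost_S(c_{k+1}). -/
theorem appminmax_bound {X : Type*} [MetricSpace X]
    (S : Set X) (hS : S.Nonempty) (n k : ℕ) (hk : k < n)
    (c : ℕ → X) (w : ℕ → ℝ) (hw : ∀ i, 0 < w i)
    (hsort : ∀ i j, i ≤ j → j < n →
      w j * infDist (c j) S ≤ w i * infDist (c i) S) :
    ∀ i < n, w i * infDist (c i) (S ∪ c '' Set.Iio k)
      ≤ w k * infDist (c k) S := by
  intro i hi
  by_cases hik : i < k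
  · have hmem : c i ∈ S ∪ c '' Set.Iio k := Or.inr ⟨i, hik, rfl⟩
    rw [infDist_zero_of_mem hmem, mul_zero]
    exact mul_nonneg (hw k).le infDist_nonneg
  · have h1 : infDist (c i) (S ∪ c '' Set.Iio k) ≤ infDist (c i) S :=
      infDist_le_infDist_of_subset Set.subset_union_left hS
    calc w i * infDist (c i) (S ∪ c '' Set.Iio k)
        ≤ w i * infDist (c i) S := by
          exact mul_le_mul_of_nonneg_left h1 (hw i).le
      _ ≤ w k * infDist (c k) S := hsort k i (not_lt.mp hik) hi
end
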